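/- Let u† ∈ L^∞(0,1) be fixed, let c₂ = exp(‖Gu†‖_∞), and let F be the nonlinear operator [F(u)](x) = exp((Gu)(x)). Then for every ρ ∈ (0,1) and every u ∈ L^∞(0,1) with ‖G(u − u†)‖_∞ ≤ ρ one has (1 − ρ) ‖F(u) − F(u†)‖_∞ ≤ c₂ ‖G(u − u†)‖_∞. In particular, the nonlinearity condition ‖F(u) − F(u†)‖ ≤ c_b ‖u − u†‖_{-1} of Assumption 2.1(g) holds with a = 1 and c_b = c₂/(1 − ρ). -/

import Mathlib

open MeasureTheory Set
open scoped Interval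

/-! With `w = Gu†` and `d = G(u − u†)` one has `F(u) − F(u†) = e^w (e^d − 1)` pointwise.
The elementary bound `(1 − |d|) |e^d − 1| ≤ |d|`, together with `|d| ≤ ρ` a.e. and
`w ≤ ‖Gu†‖_∞` a.e., gives the estimate almost everywhere; `‖Gu†‖_∞ ≤ ‖u†‖_∞` is finite. -/

namespace Real

theorem one_sub_abs_mul_abs_exp_sub_one_le (d : ℝ) : (1 - |d|) * |exp d - 1| ≤ |d| := by
  rcases le_or_gt 1 |d| with hd1 | hd1
  · nlinarith [abs_nonneg d, abs_nonneg (exp d - 1)]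
  rcases le_or_gt 0 d with hd | hd
  · have hexp : exp d * (1 - d) ≤ 1 := by
      have := exp_bound_div_one_sub_of_interval hd ((le_abs_self d).trans_lt hd1)
      rwa [le_div_iff₀ (by linarith [le_abs_self d])] at this
    rw [abs_of_nonneg hd, abs_of_nonneg (by linarith [one_le_exp hd])]
    nlinarith
  · have hexp : exp d ≤ 1 := exp_le_one_iff.2 hd.le
    rw [abs_of_neg hd, abs_of_nonpos (by linarith)]
    nlinarith [add_one_le_exp d]

theorem one_sub_mul_abs_exp_sub_exp_le {v w ρ M : ℝ} (hw : w ≤ M) (hvw : |v - w| ≤ ρ) :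
    (1 - ρ) * |exp v - exp w| ≤ exp M * |v - w| := by
  have hfactor : exp v - exp w = exp w * (exp (v - w) - 1) := by
    rw [mul_sub, ← exp_add]; ring_nf
  calc (1 - ρ) * |exp v - exp w| = exp w * ((1 - ρ) * |exp (v - w) - 1|) := by
        rw [hfactor, abs_mul, abs_of_pos (exp_pos w)]; ring
    _ ≤ exp w * ((1 - |v - w|) * |exp (v - w) - 1|) := by gcongr
    _ ≤ exp w * |v - w| := by gcongr; exact one_sub_abs_mul_abs_exp_sub_one_le _
    _ ≤ exp M * |v - w| := by gcongr

end Real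

section eLpNormTop

variable {α E F : Type*} [MeasurableSpace α] {μ : Measure α}
  [NormedAddCommGroup E] [NormedAddCommGroup F]

theorem ae_norm_le_of_eLpNorm_top_le {f : α → E} {C : ℝ} (hC : 0 ≤ C)
    (h : eLpNorm f ⊤ μ ≤ ENNReal.ofReal C) : ∀ᵐ x ∂μ, ‖f x‖ ≤ C := by
  filter_upwards [ae_le_eLpNormEssSup (f := f) (μ := μ)] with x hx
  rw [← eLpNorm_exponent_top, ← ofReal_norm] at hx
  exact (ENNReal.ofReal_le_ofReal_iff hC).1 (hx.trans h)

theorem ae_norm_le_toReal_eLpNorm_top {f : α → E} (hf : eLpNorm f ⊤ μ ≠ ⊤) :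
    ∀ᵐ x ∂μ, ‖f x‖ ≤ (eLpNorm f ⊤ μ).toReal :=
  ae_norm_le_of_eLpNorm_top_le ENNReal.toReal_nonneg (ENNReal.ofReal_toReal hf).ge

theorem ofReal_mul_eLpNorm_le_of_ae_le [NormedSpace ℝ E] [NormedSpace ℝ F]
    {f : α → E} {g : α → F} {p : ENNReal} {c C : ℝ} (hc : 0 ≤ c) (hC : 0 ≤ C)
    (h : ∀ᵐ x ∂μ, c * ‖f x‖ ≤ C * ‖g x‖) :
    ENNReal.ofReal c * eLpNorm f p μ ≤ ENNReal.ofReal C * eLpNorm g p μ := by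
  rw [← Real.enorm_of_nonneg hc, ← Real.enorm_of_nonneg hC, ← eLpNorm_const_smul,
    ← eLpNorm_const_smul]
  refine eLpNorm_mono_ae ?_
  filter_upwards [h] with x hx
  simpa only [Pi.smul_apply, norm_smul, Real.norm_of_nonneg hc, Real.norm_of_nonneg hC] using hx

theorem eLpNorm_top_intervalIntegral_le [NormedSpace ℝ E] {f : ℝ → E} {a b : ℝ}
    (hf : MemLp f ⊤ (volume.restrict (Ioo a b))) :
    eLpNorm (fun x => ∫ t in a..x, f t) ⊤ (volume.restrict (Ioo a b)) ≤
      ENNReal.ofReal (b - a) * eLpNorm f ⊤ (volume.restrict (Ioo a b)) := by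
  set K := (eLpNorm f ⊤ (volume.restrict (Ioo a b))).toReal
  have hfK : ∀ᵐ t, t ∈ Ioo a b → ‖f t‖ ≤ K :=
    (ae_restrict_iff' measurableSet_Ioo).1 (ae_norm_le_toReal_eLpNorm_top hf.eLpNorm_ne_top)
  have hbound : ∀ x ∈ Ioo a b, ‖∫ t in a..x, f t‖ ≤ (b - a) * K := by
    intro x hx
    have hfK' : ∀ᵐ t, t ∈ Ι a x → ‖f t‖ ≤ K := by
      filter_upwards [hfK] with t ht htx
      rw [uIoc_of_le hx.1.le] at htx
      exact ht ⟨htx.1, htx.2.trans_lt hx.2⟩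
    calc ‖∫ t in a..x, f t‖ ≤ K * |x - a| :=
          intervalIntegral.norm_integral_le_of_norm_le_const_ae hfK'
      _ ≤ (b - a) * K := by
        rw [abs_of_pos (sub_pos.2 hx.1), mul_comm]
        gcongr
        exact hx.2.le
  rw [eLpNorm_exponent_top, ← ENNReal.ofReal_toReal hf.eLpNorm_ne_top,
    ← ENNReal.ofReal_mul' ENNReal.toReal_nonneg]
  exact eLpNormEssSup_le_of_ae_bound ((ae_restrict_iff' measurableSet_Ioo).2 (.of_forall hbound))

end eLpNormTop

theorem exponential_forward_operator_nonlinearity_upper_general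
    (udag : ℝ → ℝ) (hudag : MemLp udag ⊤ (volume.restrict (Set.Ioo 0 1)))
    (ρ : ℝ) (hρ : ρ ∈ Set.Ioo (0:ℝ) 1)
    (u : ℝ → ℝ)
    (hclose : eLpNorm (fun x => (∫ t in (0:ℝ)..x, u t) - ∫ t in (0:ℝ)..x, udag t) ⊤
      (volume.restrict (Set.Ioo 0 1)) ≤ ENNReal.ofReal ρ) :
    ENNReal.ofReal (1 - ρ) *
        eLpNorm (fun x => Real.exp (∫ t in (0:ℝ)..x, u t) -
          Real.exp (∫ t in (0:ℝ)..x, udag t)) ⊤ (volume.restrict (Set.Ioo 0 1)) ≤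
      ENNReal.ofReal
          (Real.exp ((eLpNorm (fun x => ∫ t in (0:ℝ)..x, udag t) ⊤
            (volume.restrict (Set.Ioo 0 1))).toReal)) *
        eLpNorm (fun x => (∫ t in (0:ℝ)..x, u t) - ∫ t in (0:ℝ)..x, udag t) ⊤
          (volume.restrict (Set.Ioo 0 1)) := by
  have hGudag :
      eLpNorm (fun x => ∫ t in (0:ℝ)..x, udag t) ⊤ (volume.restrict (Ioo 0 1)) ≠ ⊤ := by
    refine ne_top_of_le_ne_top ?_ (eLpNorm_top_intervalIntegral_le hudag)
    simpa using hudag.eLpNorm_ne_top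
  refine ofReal_mul_eLpNorm_le_of_ae_le (by linarith [hρ.2]) (Real.exp_pos _).le ?_
  filter_upwards [ae_norm_le_of_eLpNorm_top_le hρ.1.le hclose,
    ae_norm_le_toReal_eLpNorm_top hGudag] with x hvw hw
  simp only [Real.norm_eq_abs] at hvw hw ⊢
  exact Real.one_sub_mul_abs_exp_sub_exp_le ((le_abs_self _).trans hw) hvw

/-- Nonlinearity condition (2.1(g), first part, with `a = 1`) for the exponential forward
operator `[F(u)](x) = exp((Gu)(x))` on `L^∞(0,1)`: with `c₂ = exp(‖Gu†‖_∞)`, for every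
`ρ ∈ (0,1)` and every `u` with `‖G(u − u†)‖_∞ ≤ ρ`, one has
`(1 − ρ) ‖F(u) − F(u†)‖_∞ ≤ c₂ ‖G(u − u†)‖_∞`. -/
theorem exponential_forward_operator_nonlinearity_upper
    (udag : ℝ → ℝ) (hudag : MemLp udag ⊤ (volume.restrict (Set.Ioo 0 1)))
    (ρ : ℝ) (hρ : ρ ∈ Set.Ioo (0:ℝ) 1)
    (u : ℝ → ℝ) (hu : MemLp u ⊤ (volume.restrict (Set.Ioo 0 1)))
    (hclose : eLpNorm (fun x => (∫ t in (0:ℝ)..x, u t) - ∫ t in (0:ℝ)..x, udag t) ⊤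
      (volume.restrict (Set.Ioo 0 1)) ≤ ENNReal.ofReal ρ) :
    ENNReal.ofReal (1 - ρ) *
        eLpNorm (fun x => Real.exp (∫ t in (0:ℝ)..x, u t) -
          Real.exp (∫ t in (0:ℝ)..x, udag t)) ⊤ (volume.restrict (Set.Ioo 0 1)) ≤
      ENNReal.ofReal
          (Real.exp ((eLpNorm (fun x => ∫ t in (0:ℝ)..x, udag t) ⊤
            (volume.restrict (Set.Ioo 0 1))).toReal)) *
        eLpNorm (fun x => (∫ t in (0:ℝ)..x, u t) - ∫ t in (0:ℝ)..x, udag t) ⊤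
          (volume.restrict (Set.Ioo 0 1)) :=
  exponential_forward_operator_nonlinearity_upper_general udag hudag ρ hρ u hclose
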